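/- For every integer n ≥ 1, V_n = (A_L − K B_R)(V_{n−1}) + (B_L − K⁻¹ A_R)(V_{n−1}) (sum of subspaces). -/

import Mathlib

noncomputable section
namespace SqPaper

/-- The two letters: `0 ↦ A`, `1 ↦ B`. -/
abbrev Ltr := Fin 2
def lA : Ltr := 0
def lB : Ltr := 1

/-- The pairing `⟨ , ⟩` on letters: `⟨A,A⟩=⟨B,B⟩=2`, `⟨A,B⟩=⟨B,A⟩=-2`. -/
def brk (x y : Ltr) : ℤ := if x = y then 2 else -2

variable (F : Type*) [Field F]

/-- The free algebra `V` on the two generators, realized as the monoid algebra of the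
free monoid on two letters; the words form the standard basis. -/
abbrev FA := MonoidAlgebra F (FreeMonoid Ltr)

/-- The standard basis vector attached to a word (list of letters). -/
def wd (l : List Ltr) : FA F := MonoidAlgebra.single (FreeMonoid.ofList l) 1

def Agen : FA F := wd F [lA]
def Bgen : FA F := wd F [lB]

/-- View an element of `V` as a finitely supported function on words. -/
def fsp (v : FA F) : FreeMonoid Ltr →₀ F := v.coeff

/-- The symmetric bilinear form on `V` for which the standard basis of words is orthonormal. -/
def form (u v : FA F) : F := (fsp F u).sum fun w c => c * (fsp F v) w

/-- Extend a function on words to an `F`-linear map on `V`. -/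
def mkMap {M : Type*} [AddCommMonoid M] [Module F M] (f : List Ltr → M) :
    FA F →ₗ[F] M :=
  Finsupp.lsum F (fun w => LinearMap.toSpanSingleton F M (f (FreeMonoid.toList w)))
    ∘ₗ (MonoidAlgebra.coeffLinearEquiv F).toLinearMap

/-- `[3]_q = (q³ - q⁻³)/(q - q⁻¹)`. -/
def tri (q : F) : F := (q ^ 3 - q⁻¹ ^ 3) / (q - q⁻¹)

/-- The q-shuffle product on words. -/
def shufW (q : F) : List Ltr → List Ltr → FA F
  | [], v => wd F v
  | u, [] => wd F u
  | a :: u, b :: v =>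
      wd F [a] * shufW q u (b :: v) +
        (q ^ (((a :: u).map (fun x => brk x b)).sum)) • (wd F [b] * shufW q (a :: u) v)
  termination_by u v => u.length + v.length

/-- The q-shuffle product `⋆` on `V`, as a bilinear map. -/
def qshuf (q : F) : FA F →ₗ[F] FA F →ₗ[F] FA F :=
  mkMap F fun u => mkMap F fun v => shufW F q u v

/-- Iterated `⋆`-product of the letters of a word. -/
def thetaW (q : F) : List Ltr → FA F
  | [] => 1
  | a :: t => qshuf F q (wd F [a]) (thetaW q t)

/-- `θ : V → V`, the algebra homomorphism from the free algebra to the q-shuffle algebra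
with `θ(A) = A`, `θ(B) = B`. -/
def theta (q : F) : FA F →ₗ[F] FA F := mkMap F fun l => thetaW F q l

/-- `A_L`, left multiplication by `A` in the free algebra. -/
def AL : FA F →ₗ[F] FA F := LinearMap.mulLeft F (Agen F)
def BL : FA F →ₗ[F] FA F := LinearMap.mulLeft F (Bgen F)
def AR : FA F →ₗ[F] FA F := LinearMap.mulRight F (Agen F)
def BR : FA F →ₗ[F] FA F := LinearMap.mulRight F (Bgen F)

/-- `X*_L` (for the letter `x`): deletes the letter `x` from the front of a word. -/
def delL (x : Ltr) : FA F →ₗ[F] FA F :=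
  mkMap F fun l => if l.head? = some x then wd F l.tail else 0

/-- `X*_R` (for the letter `x`): deletes the letter `x` from the end of a word. -/
def delR (x : Ltr) : FA F →ₗ[F] FA F :=
  mkMap F fun l => if l.getLast? = some x then wd F l.dropLast else 0

/-- `X_ℓ`: left q-shuffle multiplication by the letter `x`. -/
def shL (q : F) (x : Ltr) : FA F →ₗ[F] FA F := qshuf F q (wd F [x])

/-- `X_r`: right q-shuffle multiplication by the letter `x`. -/
def shR (q : F) (x : Ltr) : FA F →ₗ[F] FA F := (qshuf F q).flip (wd F [x])

/-- `X*_ℓ`: the weighted deletion map, deleting an occurrence of the letter `x`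
with weight `q^{⟨v₁,x⟩+⋯+⟨v_{i-1},x⟩}`. -/
def lowL (q : F) (x : Ltr) : FA F →ₗ[F] FA F :=
  mkMap F fun l =>
    ∑ i ∈ Finset.range l.length,
      if l[i]? = some x then
        (q ^ (((l.take i).map (fun y => brk y x)).sum)) • wd F (l.eraseIdx i)
      else 0

/-- `X*_r`: the weighted deletion map, deleting an occurrence of the letter `x`
with weight `q^{⟨vₙ,x⟩+⋯+⟨v_{i+1},x⟩}`. -/
def lowR (q : F) (x : Ltr) : FA F →ₗ[F] FA F :=
  mkMap F fun l =>
    ∑ i ∈ Finset.range l.length,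
      if l[i]? = some x then
        (q ^ (((l.drop (i + 1)).map (fun y => brk y x)).sum)) • wd F (l.eraseIdx i)
      else 0

/-- `K`, the algebra automorphism of the free algebra `V` with `K(A) = q²A`, `K(B) = q⁻²B`;
on a word `v = v₁⋯vₙ` it acts as `K(v) = v·q^{⟨v₁,A⟩+⋯+⟨vₙ,A⟩}`. -/
def Kop (q : F) : FA F →ₗ[F] FA F :=
  mkMap F fun l => (q ^ ((l.map (fun y => brk y lA)).sum)) • wd F l

/-- `K⁻¹`; on a word `v = v₁⋯vₙ` it acts as `K⁻¹(v) = v·q^{⟨v₁,B⟩+⋯+⟨vₙ,B⟩}`. -/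
def Kinv (q : F) : FA F →ₗ[F] FA F :=
  mkMap F fun l => (q ^ ((l.map (fun y => brk y lB)).sum)) • wd F l

/-- `T`, the automorphism of the free algebra swapping `A` and `B`. -/
def Top : FA F →ₗ[F] FA F :=
  mkMap F fun l => wd F (l.map (fun x => if x = lA then lB else lA))

/-- `Â = Q(A_L − K B_R)` and `B̂ = Q(B_L − K⁻¹ A_R)` where `Q = 1 - q²`. -/
def hatOp (q : F) (a : Ltr) : FA F →ₗ[F] FA F :=
  if a = lA then (1 - q ^ 2) • (AL F - Kop F q ∘ₗ BR F)
  else (1 - q ^ 2) • (BL F - Kinv F q ∘ₗ AR F)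

def phiW (q : F) : List Ltr → FA F
  | [] => 1
  | a :: t => hatOp F q a (phiW q t)

/-- The map `φ`: `φ(1) = 1` and `φ(v₁⋯vₙ) = v̂₁v̂₂⋯v̂ₙ(1)`. -/
def phi (q : F) : FA F →ₗ[F] FA F := mkMap F fun l => phiW F q l

/-- `ψ = K B_R A*_L + K⁻¹ A_R B*_L`. -/
def psi (q : F) : FA F →ₗ[F] FA F :=
  Kop F q ∘ₗ BR F ∘ₗ delL F lA + Kinv F q ∘ₗ AR F ∘ₗ delL F lB

/-- `V_n`, the span of the words of length `n`. -/
def Vn (n : ℕ) : Submodule F (FA F) :=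
  Submodule.span F { x | ∃ l : List Ltr, l.length = n ∧ x = wd F l }

/-- `J⁺ = A³B − [3]_q A²BA + [3]_q ABA² − BA³`. -/
def Jp (q : F) : FA F :=
  Agen F ^ 3 * Bgen F - tri F q • (Agen F ^ 2 * Bgen F * Agen F)
    + tri F q • (Agen F * Bgen F * Agen F ^ 2) - Bgen F * Agen F ^ 3

/-- `J⁻ = B³A − [3]_q B²AB + [3]_q BAB² − AB³`. -/
def Jm (q : F) : FA F :=
  Bgen F ^ 3 * Agen F - tri F q • (Bgen F ^ 2 * Agen F * Bgen F)
    + tri F q • (Bgen F * Agen F * Bgen F ^ 2) - Agen F * Bgen F ^ 3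

/-- `J`, the two-sided ideal of the free algebra generated by `J⁺` and `J⁻`
(realized as the `F`-span of the elements `a·J^±·b`). -/
def Jsub (q : F) : Submodule F (FA F) :=
  Submodule.span F { x | ∃ a b : FA F, x = a * Jp F q * b ∨ x = a * Jm F q * b }

/-- `U`, the subalgebra of the q-shuffle algebra `(V,⋆)` generated by `A` and `B`,
realized as the span of all `⋆`-products of the letters. -/
def Usub (q : F) : Submodule F (FA F) :=
  Submodule.span F (Set.range fun l : List Ltr => thetaW F q l)

/-- A `□_q`-module structure on an `F`-vector space `M`: four operators
`x₀, x₁, x₂, x₃` (indices mod 4) satisfying the q-Weyl and q-Serre relations. -/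
structure SqAct (q : F) (M : Type*) [AddCommGroup M] [Module F M] where
  x : ZMod 4 → Module.End F M
  weyl : ∀ i : ZMod 4,
    q • (x i * x (i + 1)) - q⁻¹ • (x (i + 1) * x i) = (q - q⁻¹) • (1 : Module.End F M)
  serre : ∀ i : ZMod 4,
    x i ^ 3 * x (i + 2) - tri F q • (x i ^ 2 * x (i + 2) * x i)
      + tri F q • (x i * x (i + 2) * x i ^ 2) - x (i + 2) * x i ^ 3 = 0

variable {F} {q : F} {M : Type*} [AddCommGroup M] [Module F M]

/-- A `□_q`-module `M` is generated by `ξ` if no proper submodule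
(subspace invariant under all the `xᵢ`) contains `ξ`. -/
def SqAct.Gen (S : SqAct F q M) (ξ : M) : Prop :=
  ∀ W : Submodule F M, (∀ i : ZMod 4, ∀ m ∈ W, S.x i m ∈ W) → ξ ∈ W → W = ⊤

/-- `W_n`: the span of the vectors `u₁u₂⋯uₙ·ξ` with each `uᵢ ∈ {x₀, x₂}`. -/
def SqAct.Wn (S : SqAct F q M) (ξ : M) (n : ℕ) : Submodule F M :=
  Submodule.span F
    { m | ∃ l : List (ZMod 4), l.length = n ∧ (∀ i ∈ l, i = 0 ∨ i = 2) ∧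
        m = l.foldr (fun i acc => S.x i acc) ξ }

end SqPaper

/-! Modulo the sum `S` of the two images, `A u ≡ q^e • u B` and `B u ≡ q^e' • u A`: a word is
congruent to a scalar multiple of its rotation `x u ↦ u x̄`, where `x̄` is the other letter.
After `2n` rotations a word of length `n` is back to itself, and the exponents telescope, as
differences of squares of the `A`-weight `2(#A - #B)`, to `-4n`. Hence `(1 - q^(-4n)) • w ∈ S`,
and `w ∈ S` since `q` is not a root of unity. -/

namespace SqPaper

section Orbit

variable {K M α : Type*} [DivisionRing K] [AddCommGroup M] [Module K M] {P : Submodule K M}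
  {f : α → α} {s : Set α} {q : K} {e : α → ℤ} {v : α → M}

theorem sub_zpow_sum_smul_iterate_mem (hq : q ≠ 0) (hf : Set.MapsTo f s s)
    (h : ∀ a ∈ s, v a - q ^ e a • v (f a) ∈ P) {a : α} (ha : a ∈ s) (k : ℕ) :
    v a - q ^ (∑ i ∈ Finset.range k, e (f^[i] a)) • v (f^[k] a) ∈ P := by
  induction k with
  | zero => simp
  | succ k ih =>
    have hk := P.smul_mem (q ^ ∑ i ∈ Finset.range k, e (f^[i] a)) (h _ (hf.iterate k ha))
    rw [Finset.sum_range_succ, zpow_add₀ hq, mul_smul, Function.iterate_succ_apply']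
    convert add_mem ih hk using 1
    rw [smul_sub]
    abel

theorem mem_of_iterate_eq_self (hq : q ≠ 0) (hf : Set.MapsTo f s s)
    (h : ∀ a ∈ s, v a - q ^ e a • v (f a) ∈ P) {a : α} (ha : a ∈ s) {k : ℕ}
    (hk : f^[k] a = a) (hne : q ^ (∑ i ∈ Finset.range k, e (f^[i] a)) ≠ 1) : v a ∈ P := by
  have hmem := sub_zpow_sum_smul_iterate_mem hq hf h ha k
  rw [hk, ← one_smul K (v a), smul_smul, mul_one, ← sub_smul] at hmem
  exact (P.smul_mem_iff (sub_ne_zero.2 hne.symm)).1 hmem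

end Orbit

section Words

def flipL (x : Ltr) : Ltr := if x = lA then lB else lA

lemma flipL_flipL (x : Ltr) : flipL (flipL x) = x := by
  fin_cases x <;> rfl

def rot : List Ltr → List Ltr
  | [] => []
  | x :: u => u ++ [flipL x]

def weightA (l : List Ltr) : ℤ := (l.map (brk · lA)).sum

def rotExp : List Ltr → ℤ
  | [] => 0
  | x :: u => ((u ++ [flipL x]).map (brk · x)).sum

lemma length_rot (l : List Ltr) : (rot l).length = l.length := by
  cases l <;> simp [rot]

lemma length_rot_iterate (k : ℕ) (l : List Ltr) : (rot^[k] l).length = l.length := by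
  induction k generalizing l with
  | zero => rfl
  | succ k ih => rw [Function.iterate_succ_apply, ih, length_rot]

lemma rot_iterate_length_append (l₁ l₂ : List Ltr) :
    rot^[l₁.length] (l₁ ++ l₂) = l₂ ++ l₁.map flipL := by
  induction l₁ generalizing l₂ with
  | nil => simp
  | cons x u ih =>
    rw [List.length_cons, Function.iterate_succ_apply, List.cons_append, rot,
      List.append_assoc, ih]
    simp

lemma rot_iterate_two_mul_length (l : List Ltr) : rot^[2 * l.length] l = l := by
  have h₁ : rot^[l.length] l = l.map flipL := by
    simpa using rot_iterate_length_append l []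
  have h₂ : rot^[l.length] (l.map flipL) = l := by
    simpa [Function.comp_def, flipL_flipL] using rot_iterate_length_append (l.map flipL) []
  rw [two_mul, Function.iterate_add_apply, h₁, h₂]

lemma eq_lA_or_eq_lB (x : Ltr) : x = lA ∨ x = lB := by
  fin_cases x
  · exact .inl rfl
  · exact .inr rfl

lemma brk_lB (y : Ltr) : brk y lB = -brk y lA := by
  fin_cases y <;> decide

lemma weightA_cons (y : Ltr) (l : List Ltr) : weightA (y :: l) = brk y lA + weightA l := by
  simp [weightA]

lemma weightA_append_singleton (l : List Ltr) (y : Ltr) :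
    weightA (l ++ [y]) = weightA l + brk y lA := by
  simp [weightA]

lemma sum_map_brk_lB (l : List Ltr) : (l.map (brk · lB)).sum = -weightA l := by
  induction l with
  | nil => rfl
  | cons y l ih => rw [List.map_cons, List.sum_cons, ih, weightA_cons, brk_lB, neg_add]

lemma eight_mul_rotExp_cons (x : Ltr) (u : List Ltr) :
    8 * rotExp (x :: u) = weightA (x :: u) ^ 2 - weightA (rot (x :: u)) ^ 2 - 16 := by
  have hAA : brk lA lA = 2 := by decide
  have hBA : brk lB lA = -2 := by decide
  obtain rfl | rfl := eq_lA_or_eq_lB x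
  · change 8 * weightA (u ++ [lB]) = weightA (lA :: u) ^ 2 - weightA (u ++ [lB]) ^ 2 - 16
    rw [weightA_cons, weightA_append_singleton, hAA, hBA]
    ring
  · change 8 * ((u ++ [lA]).map (brk · lB)).sum
      = weightA (lB :: u) ^ 2 - weightA (u ++ [lA]) ^ 2 - 16
    rw [sum_map_brk_lB, weightA_cons, weightA_append_singleton, hAA, hBA]
    ring

lemma sum_rotExp_full_turn (l : List Ltr) :
    ∑ i ∈ Finset.range (2 * l.length), rotExp (rot^[i] l) = -(4 * l.length) := by
  by_cases hl : l = []
  · subst hl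
    rfl
  have hstep : ∀ i, 8 * rotExp (rot^[i] l)
      = weightA (rot^[i] l) ^ 2 - weightA (rot^[i + 1] l) ^ 2 - 16 := by
    intro i
    have hne : rot^[i] l ≠ [] := by
      rw [← List.length_pos_iff, length_rot_iterate]
      exact List.length_pos_iff.2 hl
    obtain ⟨x, u, hxu⟩ := List.exists_cons_of_ne_nil hne
    rw [Function.iterate_succ_apply', hxu]
    exact eight_mul_rotExp_cons x u
  have h8 : 8 * ∑ i ∈ Finset.range (2 * l.length), rotExp (rot^[i] l)
      = weightA l ^ 2 - weightA (rot^[2 * l.length] l) ^ 2 - 16 * (2 * l.length) := by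
    rw [Finset.mul_sum, Finset.sum_congr rfl fun i _ => hstep i, Finset.sum_sub_distrib,
      Finset.sum_range_sub' fun i => weightA (rot^[i] l) ^ 2]
    simp [mul_comm]
  rw [rot_iterate_two_mul_length] at h8
  linarith

end Words

section FreeAlgebra

variable {F : Type*} [Field F]

lemma mkMap_wd {M : Type*} [AddCommMonoid M] [Module F M] (f : List Ltr → M) (l : List Ltr) :
    mkMap F f (wd F l) = f l := by
  simp [mkMap, wd]

lemma wd_mul (l l' : List Ltr) : wd F l * wd F l' = wd F (l ++ l') := by
  simp [wd, MonoidAlgebra.single_mul_single, FreeMonoid.ofList_append]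

lemma wd_mem_Vn {l : List Ltr} {n : ℕ} (hl : l.length = n) : wd F l ∈ Vn F n :=
  Submodule.subset_span ⟨l, hl, rfl⟩

lemma map_Vn_le {f : FA F →ₗ[F] FA F} {n : ℕ}
    (hf : ∀ l : List Ltr, l.length = n → f (wd F l) ∈ Vn F (n + 1)) :
    (Vn F n).map f ≤ Vn F (n + 1) := by
  rw [Submodule.map_le_iff_le_comap, Vn, Submodule.span_le]
  rintro _ ⟨l, hl, rfl⟩
  exact hf l hl

lemma AL_sub_Kop_comp_BR_wd (q : F) (u : List Ltr) :
    (AL F - Kop F q ∘ₗ BR F) (wd F u)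
      = wd F (lA :: u) - q ^ rotExp (lA :: u) • wd F (rot (lA :: u)) := by
  simp only [LinearMap.sub_apply, LinearMap.comp_apply, AL, BR, LinearMap.mulLeft_apply,
    LinearMap.mulRight_apply, Agen, Bgen, wd_mul, Kop, mkMap_wd]
  rfl

lemma BL_sub_Kinv_comp_AR_wd (q : F) (u : List Ltr) :
    (BL F - Kinv F q ∘ₗ AR F) (wd F u)
      = wd F (lB :: u) - q ^ rotExp (lB :: u) • wd F (rot (lB :: u)) := by
  simp only [LinearMap.sub_apply, LinearMap.comp_apply, BL, AR, LinearMap.mulLeft_apply,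
    LinearMap.mulRight_apply, Agen, Bgen, wd_mul, Kinv, mkMap_wd]
  rfl

/-- The right-hand side of the decomposition of `V_{n+1}`. -/
abbrev imageSum (q : F) (n : ℕ) : Submodule F (FA F) :=
  (Vn F n).map (AL F - Kop F q ∘ₗ BR F) ⊔ (Vn F n).map (BL F - Kinv F q ∘ₗ AR F)

lemma imageSum_le_Vn (q : F) (n : ℕ) : imageSum q n ≤ Vn F (n + 1) := by
  have hlen (x : Ltr) {u : List Ltr} (hu : u.length = n) : (rot (x :: u)).length = n + 1 := by
    rw [length_rot, List.length_cons, hu]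
  refine sup_le (map_Vn_le fun u hu => ?_) (map_Vn_le fun u hu => ?_)
  · rw [AL_sub_Kop_comp_BR_wd]
    exact sub_mem (wd_mem_Vn (by simp [hu])) (Submodule.smul_mem _ _ (wd_mem_Vn (hlen lA hu)))
  · rw [BL_sub_Kinv_comp_AR_wd]
    exact sub_mem (wd_mem_Vn (by simp [hu])) (Submodule.smul_mem _ _ (wd_mem_Vn (hlen lB hu)))

lemma wd_sub_zpow_smul_rot_mem {q : F} {n : ℕ} {l : List Ltr} (hl : l.length = n + 1) :
    wd F l - q ^ rotExp l • wd F (rot l) ∈ imageSum q n := by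
  obtain ⟨x, u, rfl⟩ := List.exists_cons_of_length_eq_add_one hl
  have hu : wd F u ∈ Vn F n := wd_mem_Vn (by simpa using hl)
  obtain rfl | rfl := eq_lA_or_eq_lB x
  · exact Submodule.mem_sup_left ⟨_, hu, AL_sub_Kop_comp_BR_wd q u⟩
  · exact Submodule.mem_sup_right ⟨_, hu, BL_sub_Kinv_comp_AR_wd q u⟩

lemma Vn_le_imageSum {q : F} (hq : q ≠ 0) {n : ℕ} (hqn : q ^ (4 * (n + 1)) ≠ 1) :
    Vn F (n + 1) ≤ imageSum q n := by
  rw [Vn, Submodule.span_le]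
  rintro _ ⟨l, hl, rfl⟩
  refine mem_of_iterate_eq_self (f := rot) (s := {w | w.length = n + 1}) (e := rotExp)
    (v := wd F) hq (fun w hw => (length_rot w).trans hw) (fun _ => wd_sub_zpow_smul_rot_mem) hl
    (rot_iterate_two_mul_length l) ?_
  rw [sum_rotExp_full_turn, hl, zpow_neg, inv_ne_one]
  exact_mod_cast hqn

end FreeAlgebra

end SqPaper

open SqPaper in
/-- for `n ≥ 1`, `V_n = (A_L − K B_R)(V_{n−1}) + (B_L − K⁻¹ A_R)(V_{n−1})`. -/
theorem Vn_decomposition (F : Type*) [Field F] (q : F) (hq : q ≠ 0)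
    (hq1 : ∀ k : ℕ, 0 < k → q ^ k ≠ 1) :
    ∀ n : ℕ, 1 ≤ n →
      Vn F n = Submodule.map (AL F - Kop F q ∘ₗ BR F) (Vn F (n - 1))
        ⊔ Submodule.map (BL F - Kinv F q ∘ₗ AR F) (Vn F (n - 1)) := by
  intro n hn
  obtain ⟨m, rfl⟩ := Nat.exists_eq_add_of_le' hn
  rw [Nat.add_sub_cancel]
  exact le_antisymm (Vn_le_imageSum hq (hq1 _ (by positivity))) (imageSum_le_Vn q m)
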